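/- If the mixture components g_i(x; θ_i) are Gaussian densities N(μ_i, Σ_i), then the belief-condensation natural parameter update of Theorem 1 is given in closed form by μ_i^{[l+1]} = E_{g_i}[w(x)·x] / E_{g_i}[w(x)] and Σ_i^{[l+1]} = E_{g_i}[w(x)·x xᵀ] / E_{g_i}[w(x)] − μ_i^{[l+1]} (μ_i^{[l+1]})ᵀ, where w(x) = f(x)/g(x; ξ^{[l]}) and expectations are under g_i(·; θ_i^{[l]}). -/

import Mathlib

/-!
Substituting `x = μ + √S y` turns `gaussianPdf d μ S` into the standard normal product density:
the Jacobian `det √S = √(det S)` cancels the normalisation `(det S)^(-1/2)` and the quadratic form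
becomes `y ⬝ᵥ y`. Hence `gaussianPdf d μ S` is the density of Mathlib's `multivariateGaussian μ S`,
whose mean `μ` and covariance `S` give `E[x j] = μ j` and `E[x j * x k] = S j k + μ j * μ k`.
The two moment-matching equations can then be solved for `μ'` and `Σ'`.
-/

open MeasureTheory Matrix

/-- Multivariate Gaussian density `N(μ, Σ)` on `ℝ^d`. -/
noncomputable def gaussianPdf (d : ℕ) (μ : Fin d → ℝ) (S : Matrix (Fin d) (Fin d) ℝ)
    (x : Fin d → ℝ) : ℝ :=
  (2 * Real.pi) ^ (-(d : ℝ) / 2) * S.det ^ (-(1 : ℝ) / 2) *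
    Real.exp (-(1 / 2) * ((x - μ) ⬝ᵥ S⁻¹.mulVec (x - μ)))

open ProbabilityTheory WithLp
open scoped MatrixOrder

theorem pi_gaussianReal_eq_withDensity {ι : Type*} [Fintype ι] :
    Measure.pi (fun _ : ι => gaussianReal 0 1) =
      volume.withDensity (fun y => ENNReal.ofReal (∏ i, gaussianPDFReal 0 1 (y i))) := by
  refine Measure.pi_eq fun s hs => ?_
  rw [withDensity_apply _ (.univ_pi hs), ← ofReal_integral_eq_lintegral_ofReal, volume_pi,
    Measure.restrict_pi_pi, integral_fintype_prod_eq_prod, ENNReal.ofReal_prod_of_nonneg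
      fun i _ => setIntegral_nonneg (hs i) fun x _ => gaussianPDFReal_nonneg 0 1 x]
  · simp [gaussianReal_apply_eq_integral]
  · rw [volume_pi, Measure.restrict_pi_pi]
    exact Integrable.fintype_prod fun i => (integrable_gaussianPDFReal 0 1).restrict
  · exact .of_forall fun y => Finset.prod_nonneg fun i _ => gaussianPDFReal_nonneg 0 1 (y i)

theorem integral_comp_add_mulVec {ι : Type*} [Fintype ι] [DecidableEq ι] (v : ι → ℝ)
    {A : Matrix ι ι ℝ} (hA : A.det ≠ 0) (F : (ι → ℝ) → ℝ) :
    ∫ y, F (v + A *ᵥ y) = |A.det|⁻¹ * ∫ x, F x := by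
  have hemb : MeasurableEmbedding (toLin' A) :=
    (LinearMap.isClosedEmbedding_of_injective (LinearMap.ker_eq_bot.mpr
      (mulVec_injective_of_isUnit ((isUnit_iff_isUnit_det A).mpr hA.isUnit)))).measurableEmbedding
  have h := hemb.integral_map (μ := volume) (fun x => F (v + x))
  rw [Real.map_matrix_volume_pi_eq_smul_volume_pi hA, integral_smul_measure,
    ENNReal.toReal_ofReal (abs_nonneg _), integral_add_left_eq_self F v] at h
  simpa [abs_inv] using h.symm

theorem Matrix.PosSemidef.det_sqrt_real {ι : Type*} [Fintype ι] [DecidableEq ι]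
    {S : Matrix ι ι ℝ} (hS : S.PosSemidef) : (CFC.sqrt S).det = √S.det := by
  rw [hS.det_sqrt, RCLike.sqrt_real]

theorem Matrix.mulVec_dotProduct_mul_self_inv_mulVec {ι : Type*} [Fintype ι] [DecidableEq ι]
    {A : Matrix ι ι ℝ} (hA : IsUnit A.det) (hAt : Aᵀ = A) (y : ι → ℝ) :
    A *ᵥ y ⬝ᵥ (A * A)⁻¹ *ᵥ (A *ᵥ y) = y ⬝ᵥ y := by
  rw [Matrix.mul_inv_rev, mulVec_mulVec, Matrix.mul_assoc, nonsing_inv_mul _ hA, Matrix.mul_one,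
    dotProduct_comm, dotProduct_mulVec, ← mulVec_transpose, mulVec_mulVec, hAt,
    mul_nonsing_inv _ hA, one_mulVec]

theorem inv_sqrt_two_pi_pow (d : ℕ) :
    (√(2 * Real.pi))⁻¹ ^ d = (2 * Real.pi) ^ (-(d : ℝ) / 2) := by
  rw [Real.sqrt_eq_rpow, ← Real.rpow_neg (by positivity), ← Real.rpow_natCast,
    ← Real.rpow_mul (by positivity)]
  ring_nf

theorem gaussianPdf_add_sqrt_mulVec {d : ℕ} (μ : Fin d → ℝ) {S : Matrix (Fin d) (Fin d) ℝ}
    (hS : S.PosDef) (y : Fin d → ℝ) :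
    gaussianPdf d μ S (μ + CFC.sqrt S *ᵥ y) =
      (CFC.sqrt S).det⁻¹ * ∏ i, gaussianPDFReal 0 1 (y i) := by
  have hdet : (CFC.sqrt S).det = √S.det := hS.posSemidef.det_sqrt_real
  have hunit : IsUnit (CFC.sqrt S).det :=
    hdet ▸ (Real.sqrt_pos.mpr hS.det_pos).ne'.isUnit
  have hsymm : (CFC.sqrt S)ᵀ = CFC.sqrt S := by
    have h := (CFC.sqrt_nonneg S).isSelfAdjoint
    rwa [IsSelfAdjoint, star_eq_conjTranspose, conjTranspose_eq_transpose_of_trivial] at h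
  have hquad : CFC.sqrt S *ᵥ y ⬝ᵥ S⁻¹ *ᵥ (CFC.sqrt S *ᵥ y) = y ⬝ᵥ y := by
    have h := mulVec_dotProduct_mul_self_inv_mulVec hunit hsymm y
    rwa [CFC.sqrt_mul_sqrt_self S hS.posSemidef.nonneg] at h
  rw [gaussianPdf, add_sub_cancel_left, hquad, hdet, Real.sqrt_eq_rpow,
    ← Real.rpow_neg hS.det_pos.le, gaussianPDFReal_def]
  simp only [NNReal.coe_one, mul_one, sub_zero]
  rw [Finset.prod_mul_distrib, Finset.prod_const, Finset.card_univ, Fintype.card_fin,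
    inv_sqrt_two_pi_pow, ← Real.exp_sum, dotProduct, Finset.mul_sum]
  ring_nf

theorem integral_gaussianPdf_mul_eq_integral_multivariateGaussian {d : ℕ} (μ : Fin d → ℝ)
    {S : Matrix (Fin d) (Fin d) ℝ} (hS : S.PosDef) {g : (Fin d → ℝ) → ℝ} (hg : Measurable g) :
    ∫ x, gaussianPdf d μ S x * g x = ∫ z, g (ofLp z) ∂multivariateGaussian (toLp 2 μ) S := by
  rw [multivariateGaussian, ← map_pi_eq_stdGaussian, Measure.map_map (by fun_prop) (by fun_prop),
    integral_map (by fun_prop) ?_, pi_gaussianReal_eq_withDensity,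
    integral_withDensity_eq_integral_toReal_smul (by fun_prop)
      (.of_forall fun _ => ENNReal.ofReal_lt_top)]
  · have hdet : 0 < (CFC.sqrt S).det :=
      hS.posSemidef.det_sqrt_real ▸ Real.sqrt_pos.mpr hS.det_pos
    have hdensity (y : Fin d → ℝ) : (ENNReal.ofReal (∏ i, gaussianPDFReal 0 1 (y i))).toReal
        = (CFC.sqrt S).det * gaussianPdf d μ S (μ + CFC.sqrt S *ᵥ y) := by
      rw [ENNReal.toReal_ofReal (Finset.prod_nonneg fun i _ => gaussianPDFReal_nonneg 0 1 (y i)),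
        gaussianPdf_add_sqrt_mulVec μ hS, mul_inv_cancel_left₀ hdet.ne']
    simp only [Function.comp_apply, ofLp_add, toEuclideanCLM_toLp, smul_eq_mul, hdensity,
      mul_assoc, integral_const_mul]
    rw [integral_comp_add_mulVec μ hdet.ne' (fun x => gaussianPdf d μ S x * g x),
      abs_of_pos hdet, mul_inv_cancel_left₀ hdet.ne']
  · exact (hg.comp (by fun_prop)).aestronglyMeasurable

theorem integral_multivariateGaussian_apply {ι : Type*} [Fintype ι] [DecidableEq ι]
    (μ : EuclideanSpace ℝ ι) (S : Matrix ι ι ℝ) (j : ι) :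
    ∫ z, z j ∂multivariateGaussian μ S = μ j := by
  simpa using (EuclideanSpace.proj (𝕜 := ℝ) j).integral_comp_comm
    (IsGaussian.integrable_id (μ := multivariateGaussian μ S))

theorem integral_multivariateGaussian_apply_mul_apply {ι : Type*} [Fintype ι] [DecidableEq ι]
    (μ : EuclideanSpace ℝ ι) {S : Matrix ι ι ℝ} (hS : S.PosSemidef) (j k : ι) :
    ∫ z, z j * z k ∂multivariateGaussian μ S = S j k + μ j * μ k := by
  have hL2 (i : ι) : MemLp (fun z : EuclideanSpace ℝ ι => z i) 2 (multivariateGaussian μ S) :=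
    (EuclideanSpace.proj (𝕜 := ℝ) i).comp_memLp' IsGaussian.memLp_two_id
  have h := covariance_eq_sub (hL2 j) (hL2 k)
  rw [covariance_eval_multivariateGaussian hS] at h
  simp only [Pi.mul_apply, integral_multivariateGaussian_apply] at h
  linarith

theorem integral_gaussianPdf_mul_apply {d : ℕ} (μ : Fin d → ℝ) {S : Matrix (Fin d) (Fin d) ℝ}
    (hS : S.PosDef) (j : Fin d) :
    ∫ x, gaussianPdf d μ S x * x j = μ j := by
  rw [integral_gaussianPdf_mul_eq_integral_multivariateGaussian μ hS (measurable_pi_apply j),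
    integral_multivariateGaussian_apply]

theorem integral_gaussianPdf_mul_apply_mul_apply {d : ℕ} (μ : Fin d → ℝ)
    {S : Matrix (Fin d) (Fin d) ℝ} (hS : S.PosDef) (j k : Fin d) :
    ∫ x, gaussianPdf d μ S x * (x j * x k) = S j k + μ j * μ k := by
  rw [integral_gaussianPdf_mul_eq_integral_multivariateGaussian μ hS (g := fun x => x j * x k)
      (by fun_prop),
    integral_multivariateGaussian_apply_mul_apply _ hS.posSemidef]

theorem bcf_gaussian_update_general {d : ℕ}
    (μl μ' : Fin d → ℝ) (Sl S' : Matrix (Fin d) (Fin d) ℝ)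
    (hS' : S'.PosDef)
    (w : (Fin d → ℝ) → ℝ)
    (D : ℝ)
    -- moment matching: the first two moments of N(μ', Σ') equal the
    -- f/g-weighted moments under g_i(·; θ^{[l]})
    (hmatch1 : ∀ j, (∫ x, gaussianPdf d μ' S' x * x j)
      = (∫ x, gaussianPdf d μl Sl x * w x * x j) / D)
    (hmatch2 : ∀ j k, (∫ x, gaussianPdf d μ' S' x * (x j * x k))
      = (∫ x, gaussianPdf d μl Sl x * w x * (x j * x k)) / D) :
    (∀ j, μ' j = (∫ x, gaussianPdf d μl Sl x * w x * x j) / D) ∧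
    (∀ j k, S' j k =
      (∫ x, gaussianPdf d μl Sl x * w x * (x j * x k)) / D - μ' j * μ' k) := by
  refine ⟨fun j => ?_, fun j k => ?_⟩
  · rw [← hmatch1 j, integral_gaussianPdf_mul_apply μ' hS']
  · rw [← hmatch2 j k, integral_gaussianPdf_mul_apply_mul_apply μ' hS']
    ring

/-- Corollary: for Gaussian mixture components, the BCF natural-parameter update
(moment matching of the sufficient statistics `t(x) = (x, x xᵀ)`) is given in closed form by
`μ' = E_{g_i}[w x]/E_{g_i}[w]` and `Σ' = E_{g_i}[w x xᵀ]/E_{g_i}[w] − μ' μ'ᵀ`,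
where `w = f/g(·; ξ^{[l]})` and expectations are under `g_i(·; θ^{[l]}) = N(μ_l, Σ_l)`. -/
theorem bcf_gaussian_update {d : ℕ}
    (f gmix : (Fin d → ℝ) → ℝ)
    (μl μ' : Fin d → ℝ) (Sl S' : Matrix (Fin d) (Fin d) ℝ)
    (hSl : Sl.PosDef) (hS' : S'.PosDef)
    (hSl_symm : Sl.IsSymm) (hS'_symm : S'.IsSymm)
    (hf_cont : Continuous f) (hf_nonneg : ∀ x, 0 ≤ f x) (hf_one : (∫ x, f x) = 1)
    (w : (Fin d → ℝ) → ℝ) (hw : ∀ x, w x = f x / gmix x)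
    (D : ℝ) (hD : D = ∫ x, gaussianPdf d μl Sl x * w x) (hDpos : 0 < D)
    -- integrability of the weighted moments
    (hint1 : ∀ j, Integrable fun x => gaussianPdf d μl Sl x * w x * x j)
    (hint2 : ∀ j k, Integrable fun x => gaussianPdf d μl Sl x * w x * (x j * x k))
    -- moment matching: the first two moments of N(μ', Σ') equal the
    -- f/g-weighted moments under g_i(·; θ^{[l]})
    (hmatch1 : ∀ j, (∫ x, gaussianPdf d μ' S' x * x j)
      = (∫ x, gaussianPdf d μl Sl x * w x * x j) / D)
    (hmatch2 : ∀ j k, (∫ x, gaussianPdf d μ' S' x * (x j * x k))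
      = (∫ x, gaussianPdf d μl Sl x * w x * (x j * x k)) / D) :
    (∀ j, μ' j = (∫ x, gaussianPdf d μl Sl x * w x * x j) / D) ∧
    (∀ j k, S' j k =
      (∫ x, gaussianPdf d μl Sl x * w x * (x j * x k)) / D - μ' j * μ' k) :=
  bcf_gaussian_update_general μl μ' Sl S' hS' w D hmatch1 hmatch2
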